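/- arXiv:0910.5444 — 8 statements merged into one kernel-verified Lean document; each statement's English description precedes it below -/
import Mathlib

section
/- Let G be a weakly modular graph (satisfying the triangle and quadrangle conditions) with no induced 4-cycle. Then for every induced 5-cycle x1,x2,x3,x4,x5 of G there exists a vertex y adjacent to all five vertices of the cycle (i.e., the 5-cycle extends to a 5-wheel). -/
/-- In a weakly modular graph with no induced 4-cycle, every induced 5-cycle
extends to a 5-wheel. -/
theorem stmt2 {V : Type*} (G : SimpleGraph V) (hconn : G.Connected)
    (tri : ∀ u v w : V, G.Adj v w → G.dist u v = G.dist u w →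
      ∃ x, G.Adj v x ∧ G.Adj w x ∧ G.dist u x + 1 = G.dist u v)
    (quad : ∀ u v w z : V, G.Adj v z → G.Adj w z → G.dist v w = 2 →
      G.dist u v = G.dist u w → G.dist u z = G.dist u v + 1 →
      ∃ x, G.Adj v x ∧ G.Adj w x ∧ G.dist u x + 1 = G.dist u v)
    (noC4 : ¬ ∃ a b c d : V, a ≠ c ∧ b ≠ d ∧ G.Adj a b ∧ G.Adj b c ∧ G.Adj c d ∧
      G.Adj d a ∧ ¬ G.Adj a c ∧ ¬ G.Adj b d)
    (x : Fin 5 → V) (hinj : Function.Injective x)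
    (hadj : ∀ i j : Fin 5, G.Adj (x i) (x j) ↔ (j = i + 1 ∨ i = j + 1)) :
    ∃ y : V, ∀ i : Fin 5, G.Adj y (x i) := by
  have hA : ∀ i j : Fin 5, (j = i + 1 ∨ i = j + 1) → G.Adj (x i) (x j) :=
    fun i j h => (hadj i j).2 h
  have hN : ∀ i j : Fin 5, ¬ (j = i + 1 ∨ i = j + 1) → ¬ G.Adj (x i) (x j) :=
    fun i j h ha => h ((hadj i j).1 ha)
  have a01 : G.Adj (x 0) (x 1) := hA 0 1 (by decide)
  have a12 : G.Adj (x 1) (x 2) := hA 1 2 (by decide)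
  have a23 : G.Adj (x 2) (x 3) := hA 2 3 (by decide)
  have a34 : G.Adj (x 3) (x 4) := hA 3 4 (by decide)
  have a04 : G.Adj (x 0) (x 4) := hA 0 4 (by decide)
  have n02 : ¬ G.Adj (x 0) (x 2) := hN 0 2 (by decide)
  have n03 : ¬ G.Adj (x 0) (x 3) := hN 0 3 (by decide)
  have n13 : ¬ G.Adj (x 1) (x 3) := hN 1 3 (by decide)
  have n24 : ¬ G.Adj (x 2) (x 4) := hN 2 4 (by decide)
  -- distance 2 lemma
  have d2 : ∀ u v w : V, G.Adj u v → G.Adj v w → ¬ G.Adj u w → u ≠ w →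
      G.dist u w = 2 := by
    intro u v w h1 h2 hn hne
    have hle : G.dist u w ≤ 2 := by
      calc G.dist u w ≤ G.dist u v + G.dist v w := hconn.dist_triangle
        _ ≤ 1 + 1 := by
            gcongr <;> simp [SimpleGraph.dist_eq_one_iff_adj, h1, h2,
              le_of_eq]
        _ = 2 := rfl
    have h0 : G.dist u w ≠ 0 := fun h => hne (hconn.dist_eq_zero_iff.mp h)
    have h1' : G.dist u w ≠ 1 := fun h =>
      hn (SimpleGraph.dist_eq_one_iff_adj.mp h)
    omega
  have d02 : G.dist (x 0) (x 2) = 2 :=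
    d2 _ _ _ a01 a12 n02 (fun h => by simpa using hinj h)
  have d03 : G.dist (x 0) (x 3) = 2 :=
    d2 _ _ _ a04 a34.symm n03 (fun h => by simpa using hinj h)
  obtain ⟨y, hy2, hy3, hyd⟩ := tri (x 0) (x 2) (x 3) a23 (d02.trans d03.symm)
  have hy0 : G.Adj (x 0) y := by
    have : G.dist (x 0) y = 1 := by omega
    exact SimpleGraph.dist_eq_one_iff_adj.mp this
  have hy1 : G.Adj y (x 1) := by
    by_contra hcon
    exact noC4 ⟨x 0, x 1, x 2, y, fun h => by simpa using hinj h,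
      fun h => n13 (by rw [h]; exact hy3.symm), a01, a12, hy2, hy0.symm, n02,
      fun h => hcon h.symm⟩
  have hy4 : G.Adj y (x 4) := by
    by_contra hcon
    exact noC4 ⟨x 0, x 4, x 3, y, fun h => by simpa using hinj h,
      fun h => n24 (by rw [h]; exact hy2), a04, a34.symm, hy3, hy0.symm, n03,
      fun h => hcon h.symm⟩
  refine ⟨y, fun i => ?_⟩
  fin_cases i
  · exact hy0.symm
  · exact hy1
  · exact hy2.symm
  · exact hy3.symm
  · exact hy4
end

section
/- A graph G is thin and has no induced 4-cycle if and only if for every vertex u and every integer i, the set of neighbors of any vertex w ∈ S_{i+1}(u) lying in B_i(u) is a clique. (Vertex condition implies thinness and absence of induced C4.) -/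
/-- If for every vertex u and every vertex w at distance i+1 from u, the set of
neighbors of w in the ball B_i(u) is a clique (the vertex condition), then the
graph is thin and contains no induced 4-cycle. -/
theorem stmt5 {V : Type*} (G : SimpleGraph V) (hconn : G.Connected)
    (vertexCond : ∀ (u w : V) (i : ℕ), G.dist u w = i + 1 →
      {x : V | G.Adj w x ∧ G.dist u x ≤ i}.Pairwise G.Adj) :
    (∀ u v x y : V, ¬ G.Adj u v → u ≠ v → G.Adj x v → G.Adj y v →
      G.dist u x + G.dist x v = G.dist u v → G.dist u y + G.dist y v = G.dist u v →
      x ≠ y → G.Adj x y) ∧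
    ¬ ∃ a b c d : V, a ≠ c ∧ b ≠ d ∧ G.Adj a b ∧ G.Adj b c ∧ G.Adj c d ∧
      G.Adj d a ∧ ¬ G.Adj a c ∧ ¬ G.Adj b d := by
  constructor
  · intro u v x y huv hne hxv hyv hx hy hxy
    have hd1 : 0 < G.dist u v := hconn.pos_dist_of_ne hne
    have hd2 : G.dist u v ≠ 1 := by
      intro h
      exact huv (SimpleGraph.dist_eq_one_iff_adj.mp h)
    set d := G.dist u v with hdd
    have hd2' : 2 ≤ d := by omega
    have hxv1 : G.dist x v = 1 := SimpleGraph.dist_eq_one_iff_adj.mpr hxv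
    have hyv1 : G.dist y v = 1 := SimpleGraph.dist_eq_one_iff_adj.mpr hyv
    have hux : G.dist u x = d - 1 := by omega
    have huy : G.dist u y = d - 1 := by omega
    have hcond := vertexCond u v (d - 1) (by omega)
    exact hcond ⟨hxv.symm, le_of_eq hux⟩ ⟨hyv.symm, le_of_eq huy⟩ hxy
  · rintro ⟨a, b, c, d, hac, hbd, hab, hbc, hcd, hda, hnac, hnbd⟩
    have hab1 : G.dist a b = 1 := SimpleGraph.dist_eq_one_iff_adj.mpr hab
    have hbc1 : G.dist b c = 1 := SimpleGraph.dist_eq_one_iff_adj.mpr hbc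
    have had1 : G.dist a d = 1 := SimpleGraph.dist_eq_one_iff_adj.mpr hda.symm
    have hle : G.dist a c ≤ 2 := by
      have := hconn.dist_triangle (u := a) (v := b) (w := c)
      omega
    have hpos : 0 < G.dist a c := hconn.pos_dist_of_ne hac
    have hne1 : G.dist a c ≠ 1 := by
      intro h; exact hnac (SimpleGraph.dist_eq_one_iff_adj.mp h)
    have hac2 : G.dist a c = 2 := by omega
    have hcond := vertexCond a c 1 hac2
    exact hnbd (hcond ⟨hbc.symm, le_of_eq hab1⟩ ⟨hcd, le_of_eq had1⟩ hbd)
end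

section
/- Let G be a weakly bridged graph (weakly modular, no induced C4), let σ be a clique, and let i ≥ 2. Then the ball B_i(σ) around σ is convex. -/
section Aux

variable {V : Type*}

private lemma adj_dist_one {G : SimpleGraph V} {a b : V} (h : G.Adj a b) : G.dist a b = 1 :=
  SimpleGraph.dist_eq_one_iff_adj.mpr h

/-- From a vertex at positive distance, there is a neighbor strictly closer to the target. -/
private lemma step_lemma {G : SimpleGraph V} (hconn : G.Connected) {x z : V}
    (h : 1 ≤ G.dist x z) : ∃ m, G.Adj x m ∧ G.dist m z + 1 = G.dist x z := by
  obtain ⟨p, hp⟩ := hconn.exists_walk_length_eq_dist x z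
  cases p with
  | nil =>
      simp only [SimpleGraph.Walk.length_nil] at hp
      omega
  | cons hadj q =>
      rename_i m
      refine ⟨m, hadj, ?_⟩
      have h1 : G.dist m z ≤ q.length := SimpleGraph.dist_le q
      have h2 : G.dist x z ≤ G.dist x m + G.dist m z := hconn.dist_triangle
      have h3 : G.dist x m = 1 := adj_dist_one hadj
      have h4 : (SimpleGraph.Walk.cons hadj q).length = q.length + 1 :=
        SimpleGraph.Walk.length_cons _ _
      omega

/-- Lemma V: in a weakly modular graph with no induced 4-cycle, for every vertex `v`,
any vertex `z` on a geodesic between `x` and `y` satisfies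
`dist z v ≤ max (dist x v) (dist y v)`.  (Convexity of balls around single vertices,
in a strong "max" form.)  Proved by strong induction on `dist x y`. -/
private lemma lemV {G : SimpleGraph V} (hconn : G.Connected)
    (tri : ∀ u v w : V, G.Adj v w → G.dist u v = G.dist u w →
      ∃ x, G.Adj v x ∧ G.Adj w x ∧ G.dist u x + 1 = G.dist u v)
    (quad : ∀ u v w z : V, G.Adj v z → G.Adj w z → G.dist v w = 2 →
      G.dist u v = G.dist u w → G.dist u z = G.dist u v + 1 →
      ∃ x, G.Adj v x ∧ G.Adj w x ∧ G.dist u x + 1 = G.dist u v)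
    (noC4 : ¬ ∃ a b c d : V, a ≠ c ∧ b ≠ d ∧ G.Adj a b ∧ G.Adj b c ∧ G.Adj c d ∧
      G.Adj d a ∧ ¬ G.Adj a c ∧ ¬ G.Adj b d) :
    ∀ k : ℕ, ∀ x y z v : V, G.dist x z + G.dist z y = G.dist x y → G.dist x y ≤ k →
      G.dist z v ≤ max (G.dist x v) (G.dist y v) := by
  intro k
  induction k with
  | zero =>
      intro x y z v hgeo hb
      have hxy : G.dist x y = 0 := Nat.le_zero.mp hb
      have hxz : G.dist x z = 0 := by omega
      have he : x = z := hconn.dist_eq_zero_iff.mp hxz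
      rw [← he]
      exact le_max_left _ _
  | succ k ih =>
      intro x y z v hgeo hb
      by_cases hk : G.dist x y ≤ k
      · exact ih x y z v hgeo hk
      have hxy : G.dist x y = k + 1 := le_antisymm hb (by omega)
      by_contra hbad
      push_neg at hbad
      obtain ⟨M, hMdef⟩ : ∃ M, M = max (G.dist x v) (G.dist y v) := ⟨_, rfl⟩
      rw [← hMdef] at hbad
      have hMx : G.dist x v ≤ M := by rw [hMdef]; exact le_max_left _ _
      have hMy : G.dist y v ≤ M := by rw [hMdef]; exact le_max_right _ _
      -- z ≠ x
      have hzx1 : 1 ≤ G.dist x z := by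
        by_contra h
        have h0 : G.dist x z = 0 := by omega
        have he : x = z := hconn.dist_eq_zero_iff.mp h0
        rw [← he] at hbad
        omega
      -- step from x towards z
      obtain ⟨m, hxm, hmz⟩ := step_lemma hconn hzx1
      have hxm1 : G.dist x m = 1 := adj_dist_one hxm
      have hmy : G.dist m y = k := by
        have t1 : G.dist m y ≤ G.dist m z + G.dist z y := hconn.dist_triangle
        have t2 : G.dist x y ≤ G.dist x m + G.dist m y := hconn.dist_triangle
        omega
      have hmgeo : G.dist m z + G.dist z y = G.dist m y := by
        have t1 : G.dist m y ≤ G.dist m z + G.dist z y := hconn.dist_triangle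
        omega
      by_cases hmv : G.dist m v ≤ M
      · have h5 := ih m y z v hmgeo (by omega)
        have h6 : G.dist z v ≤ M := le_trans h5 (max_le hmv hMy)
        omega
      push_neg at hmv
      -- pin the distances of m and x to v
      have hmvle : G.dist m v ≤ M + 1 := by
        have t1 : G.dist m v ≤ G.dist m x + G.dist x v := hconn.dist_triangle
        have t2 : G.dist m x = 1 := by rw [SimpleGraph.dist_comm]; exact hxm1
        omega
      have hmveq : G.dist m v = M + 1 := by omega
      have hxvE : G.dist x v = M := by
        have t1 : G.dist m v ≤ G.dist m x + G.dist x v := hconn.dist_triangle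
        have t2 : G.dist m x = 1 := by rw [SimpleGraph.dist_comm]; exact hxm1
        omega
      -- k ≥ 1 : otherwise m = y
      have hk1 : 1 ≤ k := by
        by_contra h
        have h0 : G.dist m y = 0 := by omega
        have he : m = y := hconn.dist_eq_zero_iff.mp h0
        rw [he] at hmveq
        omega
      by_cases hk2 : k = 1
      · -- distance 2 case : quadrangle condition plus no induced C4
        have hmyadj : G.Adj m y := SimpleGraph.dist_eq_one_iff_adj.mp (by omega)
        have hyvE : G.dist y v = M := by
          have t1 : G.dist m v ≤ G.dist m y + G.dist y v := hconn.dist_triangle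
          omega
        have hvx : G.dist v x = M := by rw [SimpleGraph.dist_comm]; exact hxvE
        have hvy : G.dist v y = M := by rw [SimpleGraph.dist_comm]; exact hyvE
        have hvm : G.dist v m = M + 1 := by rw [SimpleGraph.dist_comm]; exact hmveq
        obtain ⟨t, hxt, hyt, htv⟩ := quad v x y m hxm hmyadj.symm (by omega)
          (by rw [hvx, hvy]) (by rw [hvm, hvx])
        rw [hvx] at htv
        have hmt_ne : m ≠ t := by
          intro h
          rw [← h] at htv
          omega
        have hmt : ¬ G.Adj m t := by
          intro h
          have h1 : G.dist m t = 1 := adj_dist_one h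
          have t1 : G.dist m v ≤ G.dist m t + G.dist t v := hconn.dist_triangle
          have t2 : G.dist t v = G.dist v t := SimpleGraph.dist_comm
          omega
        have hxy_ne : x ≠ y := by
          intro h
          rw [h, SimpleGraph.dist_self] at hxy
          omega
        have hxy_nadj : ¬ G.Adj x y := by
          intro h
          have := adj_dist_one h
          omega
        exact noC4 ⟨x, m, y, t, hxy_ne, hmt_ne, hxm, hmyadj, hyt, hxt.symm, hxy_nadj, hmt⟩
      · -- distance ≥ 3 case
        have hk2' : 2 ≤ k := by omega
        obtain ⟨n, hmn, hnyd⟩ := step_lemma hconn (show 1 ≤ G.dist m y by omega)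
        have hmn1 : G.dist m n = 1 := adj_dist_one hmn
        have hxn : G.dist x n = 2 := by
          have t1 : G.dist x y ≤ G.dist x n + G.dist n y := hconn.dist_triangle
          have t2 : G.dist x n ≤ G.dist x m + G.dist m n := hconn.dist_triangle
          omega
        by_cases hnv : G.dist n v ≤ M
        · -- m is on a geodesic from x to n, both close to v : contradiction by IH at distance 2
          have hmid : G.dist x m + G.dist m n = G.dist x n := by omega
          have h5 := ih x n m v hmid (by omega)
          have h6 : G.dist m v ≤ M := le_trans h5 (max_le (le_of_eq hxvE) hnv)
          omega
        push_neg at hnv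
        have hnvle : G.dist n v ≤ M + 1 := by
          have hngeo : G.dist m n + G.dist n y = G.dist m y := by omega
          have h5 := ih m y n v hngeo (by omega)
          exact le_trans h5 (max_le (le_of_eq hmveq) (by omega))
        have hnveq : G.dist n v = M + 1 := by omega
        -- triangle condition at v for the edge (m, n)
        have hvm : G.dist v m = M + 1 := by rw [SimpleGraph.dist_comm]; exact hmveq
        have hvn : G.dist v n = M + 1 := by rw [SimpleGraph.dist_comm]; exact hnveq
        obtain ⟨c, hmc, hnc, hcv⟩ := tri v m n hmn (by rw [hvm, hvn])
        rw [hvm] at hcv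
        have hcvE : G.dist c v = M := by
          have : G.dist c v = G.dist v c := SimpleGraph.dist_comm
          omega
        by_cases hca : c = x
        · rw [hca] at hnc
          have h1 : G.dist n x = 1 := adj_dist_one hnc
          have h2 : G.dist x n = G.dist n x := SimpleGraph.dist_comm
          omega
        by_cases hac : G.Adj x c
        · -- splice : n lies on a geodesic from c to y with c close to v
          have hac1 : G.dist x c = 1 := adj_dist_one hac
          have hcn1 : G.dist c n = 1 := adj_dist_one hnc.symm
          have hcy : G.dist c y = k := by
            have t1 : G.dist c y ≤ G.dist c n + G.dist n y := hconn.dist_triangle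
            have t2 : G.dist x y ≤ G.dist x c + G.dist c y := hconn.dist_triangle
            omega
          have hcngeo : G.dist c n + G.dist n y = G.dist c y := by omega
          have h5 := ih c y n v hcngeo (by omega)
          have h6 : G.dist n v ≤ M := le_trans h5 (max_le (le_of_eq hcvE) hMy)
          omega
        · -- quadrangle condition at v plus no induced C4
          have hmc1 : G.dist m c = 1 := adj_dist_one hmc
          have hxc2 : G.dist x c = 2 := by
            have t2 : G.dist x c ≤ G.dist x m + G.dist m c := hconn.dist_triangle
            have h0 : G.dist x c ≠ 0 := fun h => hca ((hconn.dist_eq_zero_iff.mp h)).symm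
            have h1 : G.dist x c ≠ 1 := fun h => hac (SimpleGraph.dist_eq_one_iff_adj.mp h)
            omega
          have hvx : G.dist v x = M := by rw [SimpleGraph.dist_comm]; exact hxvE
          have hvc : G.dist v c = M := by rw [SimpleGraph.dist_comm]; exact hcvE
          obtain ⟨t, hxt, hct, htv⟩ := quad v x c m hxm hmc.symm hxc2
            (by rw [hvx, hvc]) (by rw [hvm, hvx])
          rw [hvx] at htv
          have hmt_ne : m ≠ t := by
            intro h
            rw [← h] at htv
            omega
          have hmt : ¬ G.Adj m t := by
            intro h
            have h1 : G.dist m t = 1 := adj_dist_one h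
            have t1 : G.dist m v ≤ G.dist m t + G.dist t v := hconn.dist_triangle
            have t2 : G.dist t v = G.dist v t := SimpleGraph.dist_comm
            omega
          exact noC4 ⟨x, m, c, t, fun h => hca h.symm, hmt_ne, hxm, hmc, hct, hxt.symm, hac, hmt⟩

/-- Local convexity of the ball of radius `i ≥ 2` around a clique. -/
private lemma localConv {G : SimpleGraph V} (hconn : G.Connected)
    (tri : ∀ u v w : V, G.Adj v w → G.dist u v = G.dist u w →
      ∃ x, G.Adj v x ∧ G.Adj w x ∧ G.dist u x + 1 = G.dist u v)
    (quad : ∀ u v w z : V, G.Adj v z → G.Adj w z → G.dist v w = 2 →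
      G.dist u v = G.dist u w → G.dist u z = G.dist u v + 1 →
      ∃ x, G.Adj v x ∧ G.Adj w x ∧ G.dist u x + 1 = G.dist u v)
    (noC4 : ¬ ∃ a b c d : V, a ≠ c ∧ b ≠ d ∧ G.Adj a b ∧ G.Adj b c ∧ G.Adj c d ∧
      G.Adj d a ∧ ¬ G.Adj a c ∧ ¬ G.Adj b d)
    (σ : Set V) (hclique : σ.Pairwise G.Adj) (i : ℕ) (hi : 2 ≤ i) :
    ∀ x y z : V, (∃ v ∈ σ, G.dist x v ≤ i) → (∃ v ∈ σ, G.dist y v ≤ i) →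
      G.Adj x z → G.Adj z y → G.dist x y = 2 → ∃ v ∈ σ, G.dist z v ≤ i := by
  intro x y z hx hy hxz hzy hxy2
  by_contra hzbad
  push_neg at hzbad
  obtain ⟨u, hu, hxu⟩ := hx
  obtain ⟨w, hw, hyw⟩ := hy
  have hzx1 : G.dist z x = 1 := adj_dist_one hxz.symm
  have hzy1 : G.dist z y = 1 := adj_dist_one hzy
  have hzu : i < G.dist z u := hzbad u hu
  have hzw : i < G.dist z w := hzbad w hw
  have hxuE : G.dist x u = i := by
    have t1 : G.dist z u ≤ G.dist z x + G.dist x u := hconn.dist_triangle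
    omega
  have hywE : G.dist y w = i := by
    have t1 : G.dist z w ≤ G.dist z y + G.dist y w := hconn.dist_triangle
    omega
  have hzuE : G.dist z u = i + 1 := by
    have t1 : G.dist z u ≤ G.dist z x + G.dist x u := hconn.dist_triangle
    omega
  have hzwE : G.dist z w = i + 1 := by
    have t1 : G.dist z w ≤ G.dist z y + G.dist y w := hconn.dist_triangle
    omega
  have hxy_ne : x ≠ y := by
    intro h
    rw [h, SimpleGraph.dist_self] at hxy2
    omega
  have hxy_nadj : ¬ G.Adj x y := by
    intro h
    have := adj_dist_one h
    omega
  by_cases hyu : G.dist y u ≤ i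
  · -- Case A : u is a witness for both x and y
    have hyuE : G.dist y u = i := by
      have t1 : G.dist z u ≤ G.dist z y + G.dist y u := hconn.dist_triangle
      omega
    have hux : G.dist u x = i := by rw [SimpleGraph.dist_comm]; exact hxuE
    have huy : G.dist u y = i := by rw [SimpleGraph.dist_comm]; exact hyuE
    have huz : G.dist u z = i + 1 := by rw [SimpleGraph.dist_comm]; exact hzuE
    obtain ⟨t, hxt, hyt, htu⟩ := quad u x y z hxz hzy.symm hxy2 (by rw [hux, huy])
      (by rw [huz, hux])
    rw [hux] at htu
    have hzt_ne : z ≠ t := by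
      intro h
      rw [← h] at htu
      omega
    have hzt : ¬ G.Adj z t := by
      intro h
      have h1 : G.dist z t = 1 := adj_dist_one h
      have t1 : G.dist z u ≤ G.dist z t + G.dist t u := hconn.dist_triangle
      have t2 : G.dist t u = G.dist u t := SimpleGraph.dist_comm
      omega
    exact noC4 ⟨x, z, y, t, hxy_ne, hzt_ne, hxz, hzy, hyt, hxt.symm, hxy_nadj, hzt⟩
  by_cases hxw : G.dist x w ≤ i
  · -- Case B : w is a witness for both x and y
    have hxwE : G.dist x w = i := by
      have t1 : G.dist z w ≤ G.dist z x + G.dist x w := hconn.dist_triangle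
      omega
    have hwx : G.dist w x = i := by rw [SimpleGraph.dist_comm]; exact hxwE
    have hwy : G.dist w y = i := by rw [SimpleGraph.dist_comm]; exact hywE
    have hwz : G.dist w z = i + 1 := by rw [SimpleGraph.dist_comm]; exact hzwE
    obtain ⟨t, hxt, hyt, htw⟩ := quad w x y z hxz hzy.symm hxy2 (by rw [hwx, hwy])
      (by rw [hwz, hwx])
    rw [hwx] at htw
    have hzt_ne : z ≠ t := by
      intro h
      rw [← h] at htw
      omega
    have hzt : ¬ G.Adj z t := by
      intro h
      have h1 : G.dist z t = 1 := adj_dist_one h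
      have t1 : G.dist z w ≤ G.dist z t + G.dist t w := hconn.dist_triangle
      have t2 : G.dist t w = G.dist w t := SimpleGraph.dist_comm
      omega
    exact noC4 ⟨x, z, y, t, hxy_ne, hzt_ne, hxz, hzy, hyt, hxt.symm, hxy_nadj, hzt⟩
  -- Case C : disjoint witnesses
  push_neg at hyu hxw
  have huw_ne : u ≠ w := by
    intro h
    rw [h] at hyu
    omega
  have hadjuw : G.Adj u w := hclique hu hw huw_ne
  have huw1 : G.dist u w = 1 := adj_dist_one hadjuw
  have hyuE : G.dist y u = i + 1 := by
    have t1 : G.dist y u ≤ G.dist y w + G.dist w u := hconn.dist_triangle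
    have t2 : G.dist w u = G.dist u w := SimpleGraph.dist_comm
    omega
  have hxwE : G.dist x w = i + 1 := by
    have t1 : G.dist x w ≤ G.dist x u + G.dist u w := hconn.dist_triangle
    omega
  -- q : the neighbor of w on a geodesic from w to y
  have hwy1 : 1 ≤ G.dist w y := by
    have : G.dist w y = G.dist y w := SimpleGraph.dist_comm
    omega
  obtain ⟨q, hwq, hqy⟩ := step_lemma hconn hwy1
  have hwq1 : G.dist w q = 1 := adj_dist_one hwq
  have hqyE : G.dist q y + 1 = i := by
    have : G.dist w y = G.dist y w := SimpleGraph.dist_comm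
    omega
  have huq2 : G.dist u q = 2 := by
    have t1 : G.dist u q ≤ G.dist u w + G.dist w q := hconn.dist_triangle
    have t2 : G.dist y u ≤ G.dist y q + G.dist q u := hconn.dist_triangle
    have t3 : G.dist q u = G.dist u q := SimpleGraph.dist_comm
    have t4 : G.dist y q = G.dist q y := SimpleGraph.dist_comm
    omega
  have hxq_ge : i ≤ G.dist x q := by
    have t1 : G.dist x w ≤ G.dist x q + G.dist q w := hconn.dist_triangle
    have t2 : G.dist q w = G.dist w q := SimpleGraph.dist_comm
    omega
  have hxq_le : G.dist x q ≤ i + 1 := by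
    have t1 : G.dist x q ≤ G.dist x y + G.dist y q := hconn.dist_triangle
    have t2 : G.dist y q = G.dist q y := SimpleGraph.dist_comm
    omega
  by_cases hxq : G.dist x q = i + 1
  · -- y lies on a geodesic from x to q, so by Lemma V its distance to u is at most i
    have hgeo : G.dist x y + G.dist y q = G.dist x q := by
      have t2 : G.dist y q = G.dist q y := SimpleGraph.dist_comm
      omega
    have h5 := lemV hconn tri quad noC4 (G.dist x q) x q y u hgeo le_rfl
    have hqul : G.dist q u ≤ i := by
      have : G.dist q u = G.dist u q := SimpleGraph.dist_comm
      omega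
    have h6 : G.dist y u ≤ i := le_trans h5 (max_le (le_of_eq hxuE) hqul)
    omega
  · -- x is equidistant to q and u : quadrangle condition at x plus no induced C4
    have hxqE : G.dist x q = i := by omega
    have hqu2 : G.dist q u = 2 := by rw [SimpleGraph.dist_comm]; exact huq2
    obtain ⟨t, hqt, hut, htx⟩ := quad x q u w hwq.symm hadjuw hqu2
      (by rw [hxqE, hxuE]) (by rw [hxwE, hxqE])
    rw [hxqE] at htx
    have htw_ne : t ≠ w := by
      intro h
      rw [h] at htx
      omega
    have htw_nadj : ¬ G.Adj t w := by
      intro h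
      have h1 : G.dist t w = 1 := adj_dist_one h
      have t1 : G.dist x w ≤ G.dist x t + G.dist t w := hconn.dist_triangle
      omega
    have huq_ne : u ≠ q := by
      intro h
      rw [← h, SimpleGraph.dist_self] at huq2
      omega
    have huq_nadj : ¬ G.Adj u q := by
      intro h
      have := adj_dist_one h
      omega
    exact noC4 ⟨u, t, q, w, huq_ne, htw_ne, hut, hqt.symm, hwq.symm, hadjuw.symm,
      huq_nadj, htw_nadj⟩

end Aux

/-- In a weakly bridged graph (weakly modular, no induced C4), the ball of
radius i ≥ 2 around a clique σ is convex. -/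
theorem stmt6 {V : Type*} (G : SimpleGraph V) (hconn : G.Connected)
    (tri : ∀ u v w : V, G.Adj v w → G.dist u v = G.dist u w →
      ∃ x, G.Adj v x ∧ G.Adj w x ∧ G.dist u x + 1 = G.dist u v)
    (quad : ∀ u v w z : V, G.Adj v z → G.Adj w z → G.dist v w = 2 →
      G.dist u v = G.dist u w → G.dist u z = G.dist u v + 1 →
      ∃ x, G.Adj v x ∧ G.Adj w x ∧ G.dist u x + 1 = G.dist u v)
    (noC4 : ¬ ∃ a b c d : V, a ≠ c ∧ b ≠ d ∧ G.Adj a b ∧ G.Adj b c ∧ G.Adj c d ∧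
      G.Adj d a ∧ ¬ G.Adj a c ∧ ¬ G.Adj b d)
    (σ : Set V) (hne : σ.Nonempty) (hclique : σ.Pairwise G.Adj)
    (i : ℕ) (hi : 2 ≤ i) :
    ∀ x y z : V, (∃ v ∈ σ, G.dist x v ≤ i) → (∃ v ∈ σ, G.dist y v ≤ i) →
      G.dist x z + G.dist z y = G.dist x y → ∃ v ∈ σ, G.dist z v ≤ i := by
  have lemA : ∀ k : ℕ, ∀ a b zz : V, (∃ v ∈ σ, G.dist a v ≤ i) → (∃ v ∈ σ, G.dist b v ≤ i) →
      G.dist a zz + G.dist zz b = G.dist a b → G.dist a b ≤ k →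
      (∀ v ∈ σ, i < G.dist zz v) → False := by
    intro k
    induction k with
    | zero =>
        intro a b zz ha hb hgeo hbound hbad
        obtain ⟨v, hv, hav⟩ := ha
        have hab0 : G.dist a b = 0 := Nat.le_zero.mp hbound
        have h0 : G.dist a zz = 0 := by omega
        have he : a = zz := hconn.dist_eq_zero_iff.mp h0
        rw [he] at hav
        have := hbad v hv
        omega
    | succ k ih =>
        intro a b zz ha hb hgeo hbound hbad
        by_cases hk : G.dist a b ≤ k
        · exact ih a b zz ha hb hgeo hk hbad
        have hab : G.dist a b = k + 1 := le_antisymm hbound (by omega)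
        have haz1 : 1 ≤ G.dist a zz := by
          by_contra h
          have h0 : G.dist a zz = 0 := by omega
          have he : a = zz := hconn.dist_eq_zero_iff.mp h0
          obtain ⟨v, hv, hav⟩ := ha
          rw [he] at hav
          have := hbad v hv
          omega
        obtain ⟨m, ham, hmz⟩ := step_lemma hconn haz1
        have ham1 : G.dist a m = 1 := adj_dist_one ham
        have hmb : G.dist m b = k := by
          have t1 : G.dist m b ≤ G.dist m zz + G.dist zz b := hconn.dist_triangle
          have t2 : G.dist a b ≤ G.dist a m + G.dist m b := hconn.dist_triangle
          omega
        have hmgeo : G.dist m zz + G.dist zz b = G.dist m b := by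
          have t1 : G.dist m b ≤ G.dist m zz + G.dist zz b := hconn.dist_triangle
          omega
        by_cases hm : ∃ v ∈ σ, G.dist m v ≤ i
        · exact ih m b zz hm hb hmgeo (by omega) hbad
        push_neg at hm
        -- pin the witness of a
        obtain ⟨va, hva, hava⟩ := id ha
        have hmva : i < G.dist m va := hm va hva
        have hma1 : G.dist m a = 1 := by rw [SimpleGraph.dist_comm]; exact ham1
        have havaE : G.dist a va = i := by
          have t1 : G.dist m va ≤ G.dist m a + G.dist a va := hconn.dist_triangle
          omega
        have hmvaE : G.dist m va = i + 1 := by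
          have t1 : G.dist m va ≤ G.dist m a + G.dist a va := hconn.dist_triangle
          omega
        have hk1 : 1 ≤ k := by
          by_contra h
          have h0 : G.dist m b = 0 := by omega
          have he : m = b := hconn.dist_eq_zero_iff.mp h0
          obtain ⟨vb, hvb, hbvb⟩ := hb
          rw [← he] at hbvb
          have := hm vb hvb
          omega
        by_cases hk2 : k = 1
        · -- distance 2 : local convexity
          have hmbadj : G.Adj m b := SimpleGraph.dist_eq_one_iff_adj.mp (by omega)
          have hloc := localConv hconn tri quad noC4 σ hclique i hi a b m ha hb ham hmbadj
            (by omega)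
          obtain ⟨v, hv, h⟩ := hloc
          have := hm v hv
          omega
        · have hk2' : 2 ≤ k := by omega
          obtain ⟨n, hmn, hnb⟩ := step_lemma hconn (show 1 ≤ G.dist m b by omega)
          have hmn1 : G.dist m n = 1 := adj_dist_one hmn
          have han : G.dist a n = 2 := by
            have t1 : G.dist a b ≤ G.dist a n + G.dist n b := hconn.dist_triangle
            have t2 : G.dist a n ≤ G.dist a m + G.dist m n := hconn.dist_triangle
            omega
          by_cases hn : ∃ v ∈ σ, G.dist n v ≤ i
          · have hloc := localConv hconn tri quad noC4 σ hclique i hi a n m ha hn ham hmn han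
            obtain ⟨v, hv, h⟩ := hloc
            have := hm v hv
            omega
          push_neg at hn
          have hnva_gt : i < G.dist n va := hn va hva
          have hbva : G.dist b va ≤ i + 1 := by
            obtain ⟨vb, hvb, hbvb⟩ := hb
            by_cases hvv : vb = va
            · rw [← hvv]; omega
            · have hadj := hclique hvb hva hvv
              have h1 : G.dist vb va = 1 := adj_dist_one hadj
              have t1 : G.dist b va ≤ G.dist b vb + G.dist vb va := hconn.dist_triangle
              omega
          have hnva_le : G.dist n va ≤ i + 1 := by
            have hngeo : G.dist m n + G.dist n b = G.dist m b := by omega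
            have h5 := lemV hconn tri quad noC4 (G.dist m b) m b n va hngeo le_rfl
            exact le_trans h5 (max_le (le_of_eq hmvaE) hbva)
          have hnvaE : G.dist n va = i + 1 := by omega
          -- triangle condition at va for the edge (m, n)
          have hvam : G.dist va m = i + 1 := by rw [SimpleGraph.dist_comm]; exact hmvaE
          have hvan : G.dist va n = i + 1 := by rw [SimpleGraph.dist_comm]; exact hnvaE
          obtain ⟨c, hmc, hnc, hcva⟩ := tri va m n hmn (by rw [hvam, hvan])
          rw [hvam] at hcva
          have hcvaE : G.dist c va = i := by
            have : G.dist c va = G.dist va c := SimpleGraph.dist_comm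
            omega
          by_cases hca : c = a
          · rw [hca] at hnc
            have h1 : G.dist n a = 1 := adj_dist_one hnc
            have h2 : G.dist a n = G.dist n a := SimpleGraph.dist_comm
            omega
          by_cases hac : G.Adj a c
          · -- splice : recurse on the pair (c, b) with n in between
            have hac1 : G.dist a c = 1 := adj_dist_one hac
            have hcn1 : G.dist c n = 1 := adj_dist_one hnc.symm
            have hcb : G.dist c b = k := by
              have t1 : G.dist c b ≤ G.dist c n + G.dist n b := hconn.dist_triangle
              have t2 : G.dist a b ≤ G.dist a c + G.dist c b := hconn.dist_triangle
              omega
            have hcngeo : G.dist c n + G.dist n b = G.dist c b := by omega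
            exact ih c b n ⟨va, hva, le_of_eq hcvaE⟩ hb hcngeo (by omega) hn
          · -- quadrangle condition at va plus no induced C4
            have hmc1 : G.dist m c = 1 := adj_dist_one hmc
            have hac2 : G.dist a c = 2 := by
              have t2 : G.dist a c ≤ G.dist a m + G.dist m c := hconn.dist_triangle
              have h0 : G.dist a c ≠ 0 := fun h => hca ((hconn.dist_eq_zero_iff.mp h)).symm
              have h1 : G.dist a c ≠ 1 := fun h => hac (SimpleGraph.dist_eq_one_iff_adj.mp h)
              omega
            have hvaa : G.dist va a = i := by rw [SimpleGraph.dist_comm]; exact havaE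
            have hvac : G.dist va c = i := by rw [SimpleGraph.dist_comm]; exact hcvaE
            obtain ⟨t, hat, hct, htva⟩ := quad va a c m ham hmc.symm hac2
              (by rw [hvaa, hvac]) (by rw [hvam, hvaa])
            rw [hvaa] at htva
            have hmt_ne : m ≠ t := by
              intro h
              rw [← h] at htva
              omega
            have hmt : ¬ G.Adj m t := by
              intro h
              have h1 : G.dist m t = 1 := adj_dist_one h
              have t1 : G.dist m va ≤ G.dist m t + G.dist t va := hconn.dist_triangle
              have t2 : G.dist t va = G.dist va t := SimpleGraph.dist_comm
              omega
            have hane : a ≠ c := hca ∘ Eq.symm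
            exact noC4 ⟨a, m, c, t, hane, hmt_ne, ham, hmc, hct, hat.symm, hac, hmt⟩
  intro x y z hx hy hgeo
  by_contra hz
  push_neg at hz
  exact lemA (G.dist x y) x y z hx hy hgeo le_rfl hz
end

section
/- Let G be a weakly bridged graph, let σ be a simplex (clique) of G, and let τ be a clique contained in the sphere S_{i+1}(σ). For each v ∈ τ let σ*(v) be the set of vertices of σ at distance i+1 from v (the metric projection). Then the family {σ*(v) : v ∈ τ} is linearly ordered by inclusion. -/
private lemma exists_adj_dist_pred {V : Type*} (G : SimpleGraph V) (hconn : G.Connected)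
    {a b : V} {k : ℕ} (h : G.dist a b = k + 1) :
    ∃ x, G.Adj a x ∧ G.dist x b = k := by
  obtain ⟨p, hp⟩ := hconn.exists_walk_length_eq_dist a b
  rw [h] at hp
  cases p with
  | nil => simp at hp
  | cons hadj q =>
    rename_i c
    refine ⟨c, hadj, le_antisymm ?_ ?_⟩
    · have := SimpleGraph.dist_le q
      simp only [SimpleGraph.Walk.length_cons] at hp
      omega
    · have htr := hconn.dist_triangle (u := a) (v := c) (w := b)
      have h1 : G.dist a c = 1 := SimpleGraph.dist_eq_one_iff_adj.2 hadj
      omega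

private lemma no_config {V : Type*} (G : SimpleGraph V) (hconn : G.Connected)
    (quad : ∀ u v w z : V, G.Adj v z → G.Adj w z → G.dist v w = 2 →
      G.dist u v = G.dist u w → G.dist u z = G.dist u v + 1 →
      ∃ x, G.Adj v x ∧ G.Adj w x ∧ G.dist u x + 1 = G.dist u v)
    (noC4 : ¬ ∃ a b c d : V, a ≠ c ∧ b ≠ d ∧ G.Adj a b ∧ G.Adj b c ∧ G.Adj c d ∧
      G.Adj d a ∧ ¬ G.Adj a c ∧ ¬ G.Adj b d) :
    ∀ k : ℕ, ∀ v v' w w' : V, G.Adj v v' → G.Adj w w' →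
      G.dist v w = k + 1 → G.dist v' w' = k + 1 →
      G.dist v w' = k + 2 → G.dist v' w = k + 2 → False := by
  intro k
  induction k with
  | zero =>
    intro v v' w w' hvv' hww' h1 h2 h3 h4
    exact noC4 ⟨v, w, w', v', fun h => by rw [h, SimpleGraph.dist_self] at h3; omega,
      fun h => by rw [h, SimpleGraph.dist_comm, SimpleGraph.dist_self] at h4; omega,
      SimpleGraph.dist_eq_one_iff_adj.1 h1, hww',
      (SimpleGraph.dist_eq_one_iff_adj.1 h2).symm, hvv'.symm,
      fun h => by rw [SimpleGraph.dist_eq_one_iff_adj.2 h] at h3; omega,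
      fun h => by rw [SimpleGraph.dist_eq_one_iff_adj.2 h.symm] at h4; omega⟩
  | succ k ih =>
    intro v v' w w' hvv' hww' h1 h2 h3 h4
    -- x : neighbor of v' on a geodesic to w'
    obtain ⟨x, hv'x, hxw'⟩ := exists_adj_dist_pred G hconn h2
    have dxw : G.dist x w = k + 2 := by
      have hub : G.dist x w ≤ G.dist x w' + G.dist w' w := hconn.dist_triangle
      have hlb : G.dist v' w ≤ G.dist v' x + G.dist x w := hconn.dist_triangle
      have : G.dist w' w = 1 := by
        rw [SimpleGraph.dist_eq_one_iff_adj]; exact hww'.symm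
      have hv'x1 : G.dist v' x = 1 := SimpleGraph.dist_eq_one_iff_adj.2 hv'x
      omega
    have dvx : G.dist v x = 2 := by
      have hub : G.dist v x ≤ G.dist v v' + G.dist v' x := hconn.dist_triangle
      have hlb : G.dist v w' ≤ G.dist v x + G.dist x w' := hconn.dist_triangle
      have hvv'1 : G.dist v v' = 1 := SimpleGraph.dist_eq_one_iff_adj.2 hvv'
      have hv'x1 : G.dist v' x = 1 := SimpleGraph.dist_eq_one_iff_adj.2 hv'x
      omega
    -- quadrangle condition with u := w
    have dwv : G.dist w v = k + 2 := by rw [SimpleGraph.dist_comm]; exact h1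
    have dwx : G.dist w x = k + 2 := by rw [SimpleGraph.dist_comm]; exact dxw
    have dwv' : G.dist w v' = k + 3 := by rw [SimpleGraph.dist_comm]; exact h4
    obtain ⟨y, hvy, hxy, hwy⟩ := quad w v x v' hvv' hv'x.symm dvx (dwv.trans dwx.symm)
      (by rw [dwv', dwv])
    rw [dwv] at hwy
    have dyw : G.dist y w = k + 1 := by rw [SimpleGraph.dist_comm]; omega
    have dyw' : G.dist y w' = k + 2 := by
      have hub : G.dist y w' ≤ G.dist y x + G.dist x w' := hconn.dist_triangle
      have hlb : G.dist v w' ≤ G.dist v y + G.dist y w' := hconn.dist_triangle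
      have h1' : G.dist y x = 1 := SimpleGraph.dist_eq_one_iff_adj.2 hxy.symm
      have h2' : G.dist v y = 1 := SimpleGraph.dist_eq_one_iff_adj.2 hvy
      omega
    have dxw' : G.dist x w' = k + 1 := hxw'
    exact ih y x w w' hxy.symm hww' dyw dxw' dyw' dxw

/-- In a weakly bridged graph, for a clique τ contained in the sphere
S_{i+1}(σ) around a clique σ, the metric projections σ*(v), v ∈ τ, are
linearly ordered by inclusion. -/
theorem stmt7 {V : Type*} (G : SimpleGraph V) (hconn : G.Connected)
    (tri : ∀ u v w : V, G.Adj v w → G.dist u v = G.dist u w →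
      ∃ x, G.Adj v x ∧ G.Adj w x ∧ G.dist u x + 1 = G.dist u v)
    (quad : ∀ u v w z : V, G.Adj v z → G.Adj w z → G.dist v w = 2 →
      G.dist u v = G.dist u w → G.dist u z = G.dist u v + 1 →
      ∃ x, G.Adj v x ∧ G.Adj w x ∧ G.dist u x + 1 = G.dist u v)
    (noC4 : ¬ ∃ a b c d : V, a ≠ c ∧ b ≠ d ∧ G.Adj a b ∧ G.Adj b c ∧ G.Adj c d ∧
      G.Adj d a ∧ ¬ G.Adj a c ∧ ¬ G.Adj b d)
    (σ : Set V) (hσne : σ.Nonempty) (hσ : σ.Pairwise G.Adj)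
    (i : ℕ) (τ : Set V) (hτ : τ.Pairwise G.Adj)
    (hτS : ∀ v ∈ τ, (∀ w ∈ σ, i + 1 ≤ G.dist v w) ∧ ∃ w ∈ σ, G.dist v w = i + 1) :
    ∀ v ∈ τ, ∀ v' ∈ τ,
      {w ∈ σ | G.dist v w = i + 1} ⊆ {w ∈ σ | G.dist v' w = i + 1} ∨
      {w ∈ σ | G.dist v' w = i + 1} ⊆ {w ∈ σ | G.dist v w = i + 1} := by
  intro v hv v' hv'
  by_cases hvv : v = v'
  · subst hvv; exact Or.inl (subset_refl _)
  have hvv' : G.Adj v v' := hτ hv hv' hvv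
  by_contra hcon
  push_neg at hcon
  obtain ⟨h1, h2⟩ := hcon
  obtain ⟨w, hwin, hv'w⟩ := Set.not_subset.1 h1
  obtain ⟨w', hw'in, hvw'⟩ := Set.not_subset.1 h2
  simp only [Set.mem_setOf_eq] at hwin hw'in hv'w hvw'
  obtain ⟨hwσ, hvw⟩ := hwin
  obtain ⟨hw'σ, hv'w'⟩ := hw'in
  have hv'wne : G.dist v' w ≠ i + 1 := fun h => hv'w ⟨hwσ, h⟩
  have hvw'ne : G.dist v w' ≠ i + 1 := fun h => hvw' ⟨hw'σ, h⟩
  have hd1 : G.dist v v' = 1 := SimpleGraph.dist_eq_one_iff_adj.2 hvv'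
  have hd1' : G.dist v' v = 1 := by rw [SimpleGraph.dist_comm]; exact hd1
  have hv'w2 : G.dist v' w = i + 2 := by
    have hub : G.dist v' w ≤ G.dist v' v + G.dist v w := hconn.dist_triangle
    have hlb := (hτS v' hv').1 w hwσ
    omega
  have hww : w ≠ w' := fun h => by rw [h, hv'w'] at hv'w2; omega
  have hww' : G.Adj w w' := hσ hwσ hw'σ hww
  have hdw1 : G.dist w' w = 1 := by
    rw [SimpleGraph.dist_eq_one_iff_adj]; exact hww'.symm
  have hvw'2 : G.dist v w' = i + 2 := by
    have hub : G.dist v w' ≤ G.dist v w + G.dist w w' := hconn.dist_triangle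
    have hlb := (hτS v hv).1 w' hw'σ
    have : G.dist w w' = 1 := SimpleGraph.dist_eq_one_iff_adj.2 hww'
    omega
  exact no_config G hconn quad noC4 i v v' w w' hvv' hww' hvw hv'w' hvw'2 hv'w2
end

section
/- In a weakly bridged graph G, if an edge zz' lies in the sphere S_i(σ) around a clique σ, then there exists a vertex v ∈ B_{i-1}(σ) adjacent to both z and z', and a vertex w ∈ σ with d(v,w) = i-1. -/
/-!
Pick `w, w' ∈ σ` with `d(z, w) = i = d(z', w')`. If one of them is equidistant from `z` and `z'`,
the triangle condition at it gives the common neighbour. Otherwise `w ∼ w'` and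
`d(z', w) = d(z, w') = i + 1`, so a neighbour `v` of `z` one step closer to `w` is at distance `i`
from `w'`. Unless `v ∼ z'`, the vertices `v, z'` are at distance `i` from `w'` with the common
neighbour `z` at distance `i + 1`, and the quadrangle condition gives a common neighbour `x` of
`v, z'` closer to `w'`. Then `z v x z'` is a 4-cycle with `v ≁ z'`, so it has the chord `z x`.
-/

namespace SimpleGraph

variable {V : Type*} {G : SimpleGraph V}

def TriangleCondition (G : SimpleGraph V) : Prop :=
  ∀ u v w : V, G.Adj v w → G.dist u v = G.dist u w →
    ∃ x, G.Adj v x ∧ G.Adj w x ∧ G.dist u x + 1 = G.dist u v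

def QuadrangleCondition (G : SimpleGraph V) : Prop :=
  ∀ u v w z : V, G.Adj v z → G.Adj w z → G.dist v w = 2 →
    G.dist u v = G.dist u w → G.dist u z = G.dist u v + 1 →
    ∃ x, G.Adj v x ∧ G.Adj w x ∧ G.dist u x + 1 = G.dist u v

def InducedC4Free (G : SimpleGraph V) : Prop :=
  ¬ ∃ a b c d : V, a ≠ c ∧ b ≠ d ∧ G.Adj a b ∧ G.Adj b c ∧ G.Adj c d ∧
    G.Adj d a ∧ ¬ G.Adj a c ∧ ¬ G.Adj b d

lemma Adj.dist_le_dist_add_one_right {u v w : V} (h : G.Adj v w) :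
    G.dist u w ≤ G.dist u v + 1 := by
  rcases h.diff_dist_adj (u := u) with h | h | h <;> omega

lemma Adj.dist_le_dist_add_one_left {u v w : V} (h : G.Adj v w) :
    G.dist w u ≤ G.dist v u + 1 := by
  rw [dist_comm, dist_comm (u := v)]
  exact h.dist_le_dist_add_one_right

lemma exists_adj_dist_eq_sub_one {u v : V} (h : G.dist u v ≠ 0) :
    ∃ w, G.Adj u w ∧ G.dist w v = G.dist u v - 1 := by
  obtain ⟨p, hp⟩ := exists_walk_of_dist_ne_zero h
  cases p with
  | nil => exact absurd dist_self h
  | cons huw q =>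
    refine ⟨_, huw, le_antisymm ?_ ?_⟩
    · have := dist_le q
      simp only [Walk.length_cons] at hp
      omega
    · have := huw.symm.dist_le_dist_add_one_left (u := v)
      omega

lemma TriangleCondition.exists_common_neighbor_dist_eq_sub_one (tri : G.TriangleCondition)
    {z z' w : V} {i : ℕ} (hzz' : G.Adj z z') (hzw : G.dist z w = i) (hz'w : G.dist z' w = i) :
    ∃ x, G.Adj x z ∧ G.Adj x z' ∧ G.dist x w = i - 1 := by
  rw [dist_comm] at hzw hz'w
  obtain ⟨x, hzx, hz'x, hx⟩ := tri w z z' hzz' (hzw.trans hz'w.symm)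
  exact ⟨x, hzx.symm, hz'x.symm, by rw [dist_comm]; omega⟩

lemma exists_common_neighbor_dist_eq_sub_one_of_crossed (quad : G.QuadrangleCondition)
    (noC4 : G.InducedC4Free) {z z' w w' : V} {i : ℕ} (hi : 1 ≤ i)
    (hzz' : G.Adj z z') (hww' : G.Adj w w') (hzw : G.dist z w = i) (hz'w : i ≤ G.dist z' w)
    (hz'w' : G.dist z' w' = i) (hzw' : G.dist z w' = i + 1) :
    ∃ x, G.Adj x z ∧ G.Adj x z' ∧ (G.dist x w = i - 1 ∨ G.dist x w' = i - 1) := by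
  obtain ⟨v, hzv, hvw⟩ := exists_adj_dist_eq_sub_one (hzw ▸ by omega : G.dist z w ≠ 0)
  by_cases hvz' : G.Adj v z'
  · exact ⟨v, hzv.symm, hvz', Or.inl (by omega)⟩
  have hw'v : G.dist w' v = i := by
    have hup : G.dist v w' ≤ G.dist v w + 1 := hww'.dist_le_dist_add_one_right
    have hdown : G.dist z w' ≤ G.dist v w' + 1 := hzv.symm.dist_le_dist_add_one_left
    rw [dist_comm]
    omega
  have hvz'_ne : v ≠ z' := by rintro rfl; omega
  have hvz'_two : G.dist v z' = 2 := by
    have hle : G.dist v z' ≤ G.dist v z + 1 := hzz'.dist_le_dist_add_one_right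
    have hvz : G.dist v z = 1 := dist_eq_one_iff_adj.mpr hzv.symm
    have hne_zero : G.dist v z' ≠ 0 := dist_ne_zero_iff_ne_and_reachable.mpr
      ⟨hvz'_ne, hzv.symm.reachable.trans hzz'.reachable⟩
    have hne_one : G.dist v z' ≠ 1 := fun h ↦ hvz' (dist_eq_one_iff_adj.mp h)
    omega
  rw [dist_comm] at hz'w' hzw'
  obtain ⟨x, hvx, hz'x, hx⟩ := quad w' v z' z hzv.symm hzz'.symm hvz'_two (by omega) (by omega)
  refine ⟨x, ?_, hz'x.symm, Or.inr (by rw [dist_comm]; omega)⟩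
  by_contra hxz
  have hzx : z ≠ x := by rintro rfl; omega
  exact noC4 ⟨z, v, x, z', hzx, hvz'_ne, hzv, hvx, hz'x.symm, hzz'.symm,
    fun h ↦ hxz h.symm, hvz'⟩

end SimpleGraph

theorem stmt8_general {V : Type*} (G : SimpleGraph V)
    (tri : ∀ u v w : V, G.Adj v w → G.dist u v = G.dist u w →
      ∃ x, G.Adj v x ∧ G.Adj w x ∧ G.dist u x + 1 = G.dist u v)
    (quad : ∀ u v w z : V, G.Adj v z → G.Adj w z → G.dist v w = 2 →
      G.dist u v = G.dist u w → G.dist u z = G.dist u v + 1 →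
      ∃ x, G.Adj v x ∧ G.Adj w x ∧ G.dist u x + 1 = G.dist u v)
    (noC4 : ¬ ∃ a b c d : V, a ≠ c ∧ b ≠ d ∧ G.Adj a b ∧ G.Adj b c ∧ G.Adj c d ∧
      G.Adj d a ∧ ¬ G.Adj a c ∧ ¬ G.Adj b d)
    (σ : Set V) (hσ : σ.Pairwise G.Adj)
    (i : ℕ) (hi : 1 ≤ i) (z z' : V) (hzz' : G.Adj z z')
    (hz : (∀ w ∈ σ, i ≤ G.dist z w) ∧ ∃ w ∈ σ, G.dist z w = i)
    (hz' : (∀ w ∈ σ, i ≤ G.dist z' w) ∧ ∃ w ∈ σ, G.dist z' w = i) :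
    ∃ v w : V, w ∈ σ ∧ G.Adj v z ∧ G.Adj v z' ∧
      (∃ w' ∈ σ, G.dist v w' ≤ i - 1) ∧ G.dist v w = i - 1 := by
  obtain ⟨hzσ, w, hw, hzw⟩ := hz
  obtain ⟨hz'σ, w', hw', hz'w'⟩ := hz'
  suffices ∃ u ∈ σ, ∃ x, G.Adj x z ∧ G.Adj x z' ∧ G.dist x u = i - 1 by
    obtain ⟨u, hu, x, hxz, hxz', hxu⟩ := this
    exact ⟨x, u, hu, hxz, hxz', ⟨u, hu, hxu.le⟩, hxu⟩
  by_cases hz'w : G.dist z' w = i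
  · exact ⟨w, hw,
      SimpleGraph.TriangleCondition.exists_common_neighbor_dist_eq_sub_one tri hzz' hzw hz'w⟩
  by_cases hzw' : G.dist z w' = i
  · exact ⟨w', hw',
      SimpleGraph.TriangleCondition.exists_common_neighbor_dist_eq_sub_one tri hzz' hzw' hz'w'⟩
  have hzw'_succ : G.dist z w' = i + 1 := by
    have hle : G.dist z w' ≤ G.dist z' w' + 1 := hzz'.symm.dist_le_dist_add_one_left
    have := hzσ w' hw'
    omega
  have hww' : G.Adj w w' := hσ hw hw' (by rintro rfl; exact hz'w hz'w')
  obtain ⟨x, hxz, hxz', hxw | hxw'⟩ :=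
    SimpleGraph.exists_common_neighbor_dist_eq_sub_one_of_crossed quad noC4
      hi hzz' hww' hzw (hz'σ w hw) hz'w' hzw'_succ
  exacts [⟨w, hw, x, hxz, hxz', hxw⟩, ⟨w', hw', x, hxz, hxz', hxw'⟩]

/-- In a weakly bridged graph, an edge zz' lying in the sphere S_i(σ) around a
clique σ descends: there is a common neighbor v of z,z' in B_{i-1}(σ) and a
vertex w ∈ σ with d(v,w) = i-1. -/
theorem stmt8 {V : Type*} (G : SimpleGraph V) (hconn : G.Connected)
    (tri : ∀ u v w : V, G.Adj v w → G.dist u v = G.dist u w →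
      ∃ x, G.Adj v x ∧ G.Adj w x ∧ G.dist u x + 1 = G.dist u v)
    (quad : ∀ u v w z : V, G.Adj v z → G.Adj w z → G.dist v w = 2 →
      G.dist u v = G.dist u w → G.dist u z = G.dist u v + 1 →
      ∃ x, G.Adj v x ∧ G.Adj w x ∧ G.dist u x + 1 = G.dist u v)
    (noC4 : ¬ ∃ a b c d : V, a ≠ c ∧ b ≠ d ∧ G.Adj a b ∧ G.Adj b c ∧ G.Adj c d ∧
      G.Adj d a ∧ ¬ G.Adj a c ∧ ¬ G.Adj b d)
    (σ : Set V) (hσne : σ.Nonempty) (hσ : σ.Pairwise G.Adj)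
    (i : ℕ) (hi : 1 ≤ i) (z z' : V) (hzz' : G.Adj z z')
    (hz : (∀ w ∈ σ, i ≤ G.dist z w) ∧ ∃ w ∈ σ, G.dist z w = i)
    (hz' : (∀ w ∈ σ, i ≤ G.dist z' w) ∧ ∃ w ∈ σ, G.dist z' w = i) :
    ∃ v w : V, w ∈ σ ∧ G.Adj v z ∧ G.Adj v z' ∧
      (∃ w' ∈ σ, G.dist v w' ≤ i - 1) ∧ G.dist v w = i - 1 :=
  stmt8_general G tri quad noC4 σ hσ i hi z z' hzz' hz hz'
end

section
/- If a finite graph G is dismantlable, then its k-th power G^k is dismantlable for every k ≥ 1. -/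
/-- A finite graph is dismantlable if its vertices admit a dismantling order. -/
def DismantlableGraph {V : Type*} [Fintype V] (G : SimpleGraph V) : Prop :=
  ∃ (n : ℕ) (e : Fin n ≃ V),
    ∀ i : Fin n, (i : ℕ) + 1 < n →
      ∃ j : Fin n, (i : ℕ) < (j : ℕ) ∧
        ∀ x : Fin n, (i : ℕ) ≤ (x : ℕ) →
          (e x = e i ∨ G.Adj (e x) (e i)) → (e x = e j ∨ G.Adj (e x) (e j))

/-!
Let `v₁, …, vₙ` be a dismantling order of `G` and `Sᵢ = {vᵢ, …, vₙ}`. Replacing `vᵢ` by the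
vertex `vⱼ` dominating it within `Sᵢ` is a retraction `Sᵢ → Sᵢ₊₁` that does not lengthen
walks, so every `Sᵢ` is isometric in `G`. Hence distances between vertices of `Sᵢ` may be
computed inside `Sᵢ`, and there domination passes to the power: the second vertex of a
shortest walk from `vᵢ` to `x` lies in `Sᵢ` and is equal or adjacent to `vⱼ`, so
`d(vⱼ, x) ≤ d(vᵢ, x)`.
-/

namespace SimpleGraph

variable {V W : Type*} {G : SimpleGraph V}

def DominatesOn (G : SimpleGraph V) (S : Set V) (u v : V) : Prop :=
  ∀ w ∈ S, (w = v ∨ G.Adj w v) → w = u ∨ G.Adj w u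

def IsIsometric (G : SimpleGraph V) (S : Set V) : Prop :=
  ∀ a ∈ S, ∀ b ∈ S, ∀ p : G.Walk a b,
    ∃ q : G.Walk a b, q.length ≤ p.length ∧ ∀ w ∈ q.support, w ∈ S

lemma isIsometric_univ : G.IsIsometric Set.univ :=
  fun _ _ _ _ p => ⟨p, le_rfl, fun _ _ => trivial⟩

lemma Walk.exists_walk_map_le {H : SimpleGraph W} {S : Set V} {f : V → W}
    (hf : ∀ x ∈ S, ∀ y ∈ S, G.Adj x y → f x = f y ∨ H.Adj (f x) (f y))
    {a b : V} (p : G.Walk a b) (hp : ∀ w ∈ p.support, w ∈ S) :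
    ∃ q : H.Walk (f a) (f b), q.length ≤ p.length ∧ ∀ w ∈ q.support, w ∈ f '' S := by
  induction p with
  | nil => exact ⟨.nil, le_rfl, by simpa using ⟨_, hp _ (by simp), rfl⟩⟩
  | @cons a c b h p ih =>
    obtain ⟨q, hq, hqS⟩ := ih fun w hw => hp w (by simp [hw])
    have ha : f a ∈ f '' S := ⟨a, hp a (by simp), rfl⟩
    rcases hf _ (hp _ (by simp)) _ (hp _ (by simp)) h with heq | hadj
    · exact ⟨q.copy heq.symm rfl, by simp; omega, by simpa using hqS⟩
    · refine ⟨.cons hadj q, by simpa using hq, ?_⟩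
      simp only [Walk.support_cons, List.mem_cons, forall_eq_or_imp]
      exact ⟨ha, hqS⟩

lemma IsIsometric.diff_singleton {S : Set V} {u v : V} (hS : G.IsIsometric S)
    (hdom : G.DominatesOn S u v) (hu : u ∈ S) (huv : u ≠ v) :
    G.IsIsometric (S \ {v}) := by
  classical
  intro a ha b hb p
  obtain ⟨q, hq, hqS⟩ := hS a ha.1 b hb.1 p
  let f : V → V := fun w => if w = v then u else w
  have hf : ∀ x ∈ S, ∀ y ∈ S, G.Adj x y → f x = f y ∨ G.Adj (f x) (f y) := by
    intro x hx y hy hxy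
    by_cases hxv : x = v <;> by_cases hyv : y = v
    · exact absurd (hxv.trans hyv.symm) hxy.ne
    · simp only [f, if_pos hxv, if_neg hyv, eq_comm (a := u), G.adj_comm u]
      exact hdom y hy (Or.inr (hxv ▸ hxy.symm))
    · simp only [f, if_neg hxv, if_pos hyv]
      exact hdom x hx (Or.inr (hyv ▸ hxy))
    · simp only [f, if_neg hxv, if_neg hyv]
      exact Or.inr hxy
  have hfS : f '' S ⊆ S \ {v} := by
    rintro _ ⟨w, hw, rfl⟩
    by_cases hwv : w = v <;> simp [f, hwv, hu, huv, hw]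
  obtain ⟨r, hr, hrS⟩ := q.exists_walk_map_le hf hqS
  have hfa : f a = a := if_neg (by simpa using ha.2)
  have hfb : f b = b := if_neg (by simpa using hb.2)
  exact ⟨r.copy hfa hfb, by simpa using hr.trans hq, by simpa using fun w hw => hfS (hrS w hw)⟩

lemma DominatesOn.dist_le_length {S : Set V} {u v x : V} (hdom : G.DominatesOn S u v)
    (p : G.Walk v x) (hp : ∀ w ∈ p.support, w ∈ S) (hx : x ≠ v) :
    G.dist u x ≤ p.length := by
  cases p with
  | nil => exact absurd rfl hx
  | cons h r =>
    rcases hdom _ (hp _ (by simp)) (Or.inr h.symm) with rfl | hwu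
    · exact (dist_le r).trans (by simp)
    · exact dist_le (.cons hwu.symm r)

lemma DominatesOn.power {S : Set V} {u v : V} (hS : G.IsIsometric S)
    (hdom : G.DominatesOn S u v) (hv : v ∈ S) (huv : u ≠ v) {k : ℕ} (hk : 1 ≤ k) :
    (fromRel fun x y => G.dist x y ≤ k).DominatesOn S u v := by
  have hadj : G.Adj u v := ((hdom v hv (Or.inl rfl)).resolve_left huv.symm).symm
  intro w hw hwv
  by_cases hwu : w = u
  · exact Or.inl hwu
  suffices G.dist u w ≤ k from Or.inr ((fromRel_adj _ _ _).2 ⟨hwu, Or.inr this⟩)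
  rcases hwv with rfl | hwv
  · exact (dist_le hadj.toWalk).trans (by simpa using hk)
  obtain ⟨hwv, hd⟩ := (fromRel_adj _ _ _).1 hwv
  replace hd : G.dist v w ≤ k := by rwa [dist_comm, or_self] at hd
  by_cases hr : G.Reachable v w
  · obtain ⟨p, hp⟩ := hr.exists_walk_length_eq_dist
    obtain ⟨q, hq, hqS⟩ := hS v hv w hw p
    exact (hdom.dist_le_length q hqS hwv).trans (hq.trans (hp ▸ hd))
  · -- `dist` is `0` across components, and `u`, `v` lie in the same component.
    have hr' : ¬G.Reachable u w := fun h => hr (hadj.symm.reachable.trans h)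
    simp [dist_eq_zero_of_not_reachable hr']

end SimpleGraph

open SimpleGraph

section Suffix

variable {V : Type*} {n : ℕ}

def suffixSet (e : Fin n ≃ V) (i : ℕ) : Set V :=
  {w | i ≤ (e.symm w : ℕ)}

lemma suffixSet_succ (e : Fin n ≃ V) (i : Fin n) :
    suffixSet e (i + 1) = suffixSet e i \ {e i} := by
  ext w
  simp only [suffixSet, Set.mem_sdiff, Set.mem_ofPred_eq, Set.mem_singleton_iff,
    ← e.symm_apply_eq, Fin.ext_iff]
  omega

lemma dismantlableGraph_iff [Fintype V] (G : SimpleGraph V) :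
    DismantlableGraph G ↔ ∃ (n : ℕ) (e : Fin n ≃ V), ∀ i : Fin n, (i : ℕ) + 1 < n →
      ∃ j : Fin n, (i : ℕ) < (j : ℕ) ∧ G.DominatesOn (suffixSet e i) (e j) (e i) := by
  refine exists_congr fun n => exists_congr fun e => forall₂_congr fun i _ =>
    exists_congr fun j => and_congr_right fun _ => ?_
  rw [DominatesOn, ← e.forall_congr_right]
  simp [suffixSet]

lemma isIsometric_suffixSet {G : SimpleGraph V} {e : Fin n ≃ V}
    (he : ∀ i : Fin n, (i : ℕ) + 1 < n →
      ∃ j : Fin n, (i : ℕ) < (j : ℕ) ∧ G.DominatesOn (suffixSet e i) (e j) (e i)) :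
    ∀ i < n, G.IsIsometric (suffixSet e i)
  | 0, _ => by simpa [suffixSet] using isIsometric_univ
  | i + 1, hi => by
    obtain ⟨j, hij, hdom⟩ := he ⟨i, by omega⟩ hi
    rw [suffixSet_succ e ⟨i, by omega⟩]
    exact (isIsometric_suffixSet he i (by omega)).diff_singleton hdom
      (by simpa [suffixSet] using hij.le) (e.injective.ne (Fin.ne_of_gt hij))

end Suffix

theorem stmt10_general {V : Type*} [Fintype V] (G : SimpleGraph V)
    (hG : DismantlableGraph G) (k : ℕ) (hk : 1 ≤ k) :
    DismantlableGraph (SimpleGraph.fromRel fun x y => G.dist x y ≤ k) := by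
  rw [dismantlableGraph_iff] at hG ⊢
  obtain ⟨n, e, he⟩ := hG
  refine ⟨n, e, fun i hi => ?_⟩
  obtain ⟨j, hij, hdom⟩ := he i hi
  exact ⟨j, hij, hdom.power (isIsometric_suffixSet he i i.isLt) (by simp [suffixSet])
    (e.injective.ne (Fin.ne_of_gt hij)) hk⟩

/-- If a finite connected graph G is dismantlable, then its k-th power G^k is
dismantlable, for every k ≥ 1. -/
theorem stmt10 {V : Type*} [Fintype V] (G : SimpleGraph V) (hconn : G.Connected)
    (hG : DismantlableGraph G) (k : ℕ) (hk : 1 ≤ k) :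
    DismantlableGraph (SimpleGraph.fromRel fun x y => G.dist x y ≤ k) :=
  stmt10_general G hG k hk
end

section
/- Let G be a weakly bridged graph, v a strictly dominated vertex (N[v] ⊊ N[w] for some w). Then the induced subgraph G − v on V(G) \ {v} is again weakly bridged; specifically, G − v contains no induced 4-cycle, and every extended 5-wheel of G − v has a vertex of G − v adjacent to all of its vertices. -/
/-- No induced 4-cycle. -/
def NoInducedC4 {V : Type*} (G : SimpleGraph V) : Prop :=
  ¬ ∃ a b c d : V, a ≠ c ∧ b ≠ d ∧ G.Adj a b ∧ G.Adj b c ∧ G.Adj c d ∧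
    G.Adj d a ∧ ¬ G.Adj a c ∧ ¬ G.Adj b d

/-- The Ŵ₅-condition: every extended 5-wheel (an induced 5-wheel with an
attached pendant triangle) has a vertex adjacent to all of its vertices. -/
def HatW5Cond {V : Type*} (G : SimpleGraph V) : Prop :=
  ∀ (x : Fin 5 → V) (c a : V),
    Function.Injective x →
    (∀ i j : Fin 5, G.Adj (x i) (x j) ↔ (j = i + 1 ∨ i = j + 1)) →
    (∀ i : Fin 5, G.Adj c (x i)) →
    a ≠ c → ¬ G.Adj a c → G.Adj a (x 0) → G.Adj a (x 1) →
    (∀ i : Fin 5, i ≠ 0 → i ≠ 1 → ¬ G.Adj a (x i)) →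
    ∃ z : V, (∀ i : Fin 5, G.Adj z (x i)) ∧ G.Adj z c ∧ G.Adj z a

/-- Removing a strictly dominated vertex from a weakly systolic graph
(no induced C4 and the Ŵ₅-condition) preserves both properties. -/
theorem stmt14 {V : Type*} (G : SimpleGraph V)
    (hC4 : NoInducedC4 G) (hW : HatW5Cond G) (v w : V)
    (hdom : insert v (G.neighborSet v) ⊂ insert w (G.neighborSet w)) :
    NoInducedC4 (G.induce {x : V | x ≠ v}) ∧
    HatW5Cond (G.induce {x : V | x ≠ v}) := by
  have hvw : v ≠ w := by
    rintro rfl; exact hdom.ne rfl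
  have hsub : ∀ u, G.Adj v u → u = w ∨ G.Adj w u := by
    intro u hu
    have := hdom.subset (Set.mem_insert_iff.mpr (Or.inr hu))
    simpa [SimpleGraph.mem_neighborSet] using this
  refine ⟨?_, ?_⟩
  · rintro ⟨a, b, c, d, hac, hbd, h1, h2, h3, h4, h5, h6⟩
    exact hC4 ⟨a, b, c, d, Subtype.coe_ne_coe.mpr hac, Subtype.coe_ne_coe.mpr hbd,
      h1, h2, h3, h4, h5, h6⟩
  · intro x c a hinj hx hc hac hnac ha0 ha1 hna
    obtain ⟨z, hz, hzc, hza⟩ := hW (fun i => (x i : V)) (c : V) (a : V)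
      (fun i j hij => hinj (Subtype.ext hij))
      (fun i j => hx i j) (fun i => hc i)
      (Subtype.coe_ne_coe.mpr hac) hnac ha0 ha1 (fun i h0 h1 => hna i h0 h1)
    by_cases hzv : z = v
    · subst hzv
      have hwx : ∀ i, G.Adj w (x i) := by
        intro i
        rcases hsub _ (hz i) with h | h
        · exfalso
          have fact1 : ∀ k : Fin 5, k + 2 ≠ k := by decide
          have fact2 : ∀ k : Fin 5, ¬(k + 2 = k + 1 ∨ k = k + 2 + 1) := by decide
          rcases hsub _ (hz (i + 2)) with h2 | h2
          · exact fact1 i (hinj (Subtype.ext (h2.trans h.symm)))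
          · rw [← h] at h2
            exact fact2 i ((hx i (i + 2)).mp h2)
        · exact h
      have hwc : G.Adj w (c : V) := by
        rcases hsub _ hzc with h | h
        · exfalso
          rcases hsub _ hza with h2 | h2
          · exact (Subtype.coe_ne_coe.mpr hac) (h2.trans h.symm)
          · rw [← h] at h2
            exact hnac h2.symm
        · exact h
      have hwa : G.Adj w (a : V) := by
        rcases hsub _ hza with h | h
        · exfalso
          have := hwx 2
          rw [← h] at this
          exact hna 2 (by decide) (by decide) this
        · exact h
      exact ⟨⟨w, hvw.symm⟩, fun i => hwx i, hwc, hwa⟩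
    · exact ⟨⟨z, hzv⟩, hz, hzc, hza⟩
end

section
/- Let G be a locally finite weakly bridged graph with a LexBFS ordering from base point u, assigning to each vertex v ≠ u a father f(v). Then the combing paths to u given by iterating f form a geodesic 1-combing: for adjacent vertices v, w, the paths P_v = (v, f(v), f²(v), ..., u) and P_w are shortest paths and satisfy d(P_v(t), P_w(t)) ≤ 1 for all t (indexing from u). -/
/-!
Fathers move one level down, so iterating `f` from `v` for `t` steps lands at level
`d(u,v) - t`, and combing paths are geodesics. Two adjacent vertices on the same level have
fathers that are equal or adjacent (first half of the Fellow Traveler Property), hence the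
same holds for all their iterated fathers. If instead `w` lies one level above its neighbour `v`,
then `v` is equal or adjacent to `f w`: otherwise the quadrangle condition applied to `v`, `f w`
and their common neighbour `w` yields a vertex `x` one level below them, and `x, v, w, f w`
would be an induced 4-cycle. This reduces the general case to the same-level one.
-/

namespace SimpleGraph

variable {V : Type*} {G : SimpleGraph V} {u : V} {f : V → V}

def IsFatherMap (G : SimpleGraph V) (u : V) (f : V → V) : Prop :=
  ∀ v, v ≠ u → G.Adj v (f v) ∧ G.dist u (f v) + 1 = G.dist u v

lemma dist_le_one_of_eq_or_adj {v w : V} (h : v = w ∨ G.Adj v w) : G.dist v w ≤ 1 := by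
  rcases h with rfl | h
  · simp
  · exact (dist_eq_one_iff_adj.mpr h).le

lemma IsFatherMap.dist_iterate (hf : IsFatherMap G u f) (hfu : f u = u) (v : V) (t : ℕ) :
    G.dist u (f^[t] v) = G.dist u v - t := by
  induction t with
  | zero => rfl
  | succ t ih =>
    rw [Function.iterate_succ_apply']
    by_cases hu : f^[t] v = u
    · rw [hu, dist_self] at ih
      rw [hu, hfu, dist_self]
      omega
    · have := (hf _ hu).2
      omega

lemma IsFatherMap.iterate_eq_or_adj_of_dist_eq (hconn : G.Connected) (hf : IsFatherMap G u f)
    (hftp : ∀ v w, v ≠ u → w ≠ u → G.Adj v w → f v = f w ∨ G.Adj (f v) (f w)) (k : ℕ) :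
    ∀ {v w : V}, G.dist u v = G.dist u w → (v = w ∨ G.Adj v w) →
      f^[k] v = f^[k] w ∨ G.Adj (f^[k] v) (f^[k] w) := by
  induction k with
  | zero => exact fun _ h => h
  | succ k ih =>
    rintro v w hd (rfl | hvw)
    · exact Or.inl rfl
    have hv : v ≠ u := by
      rintro rfl
      exact hvw.ne (hconn.dist_eq_zero_iff.mp (by simpa using hd.symm))
    have hw : w ≠ u := by
      rintro rfl
      exact hvw.ne ((hconn.dist_eq_zero_iff.mp (by simpa using hd)).symm)
    have hfd : G.dist u (f v) = G.dist u (f w) := by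
      have := (hf v hv).2
      have := (hf w hw).2
      omega
    exact ih hfd (hftp v w hv hw hvw)

lemma IsFatherMap.eq_or_adj_father_of_adj (hconn : G.Connected) (hf : IsFatherMap G u f)
    (quad : ∀ v w z : V, G.Adj v z → G.Adj w z → G.dist v w = 2 →
      G.dist u v = G.dist u w → G.dist u z = G.dist u v + 1 →
      ∃ x, G.Adj v x ∧ G.Adj w x ∧ G.dist u x + 1 = G.dist u v)
    (noC4 : ¬ ∃ a b c d : V, a ≠ c ∧ b ≠ d ∧ G.Adj a b ∧ G.Adj b c ∧ G.Adj c d ∧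
      G.Adj d a ∧ ¬ G.Adj a c ∧ ¬ G.Adj b d)
    {v w : V} (hvw : G.Adj v w) (hd : G.dist u w = G.dist u v + 1) :
    v = f w ∨ G.Adj v (f w) := by
  have hw : w ≠ u := by
    rintro rfl
    simp at hd
  obtain ⟨hwf, hdf⟩ := hf w hw
  by_contra! ⟨hne, hnadj⟩
  have hd2 : G.dist v (f w) = 2 :=
    le_antisymm (dist_le (.cons hvw (.cons hwf .nil)))
      (hconn.one_lt_dist_of_ne_of_not_adj hne hnadj)
  obtain ⟨x, hvx, hfx, hdx⟩ := quad v (f w) w hvw hwf.symm hd2 (by omega) (by omega)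
  have hxw : ¬ G.Adj x w := fun h => by
    rcases h.diff_dist_adj (u := u) with h | h | h <;> omega
  exact noC4 ⟨x, v, w, f w, fun h => by subst h; omega, hne, hvx.symm, hvw, hwf, hfx,
    hxw, hnadj⟩

lemma IsFatherMap.dist_comb_le_one_of_adj_of_dist_succ (hconn : G.Connected)
    (hf : IsFatherMap G u f)
    (hftp : ∀ v w, v ≠ u → w ≠ u → G.Adj v w → f v = f w ∨ G.Adj (f v) (f w))
    (quad : ∀ v w z : V, G.Adj v z → G.Adj w z → G.dist v w = 2 →
      G.dist u v = G.dist u w → G.dist u z = G.dist u v + 1 →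
      ∃ x, G.Adj v x ∧ G.Adj w x ∧ G.dist u x + 1 = G.dist u v)
    (noC4 : ¬ ∃ a b c d : V, a ≠ c ∧ b ≠ d ∧ G.Adj a b ∧ G.Adj b c ∧ G.Adj c d ∧
      G.Adj d a ∧ ¬ G.Adj a c ∧ ¬ G.Adj b d)
    {v w : V} (hvw : G.Adj v w) (hd : G.dist u w = G.dist u v + 1) (t : ℕ) :
    G.dist (f^[G.dist u v - t] v) (f^[G.dist u w - t] w) ≤ 1 := by
  rcases le_or_gt t (G.dist u v) with ht | ht
  · have hw : w ≠ u := by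
      rintro rfl
      simp at hd
    have hfd : G.dist u v = G.dist u (f w) := by
      have := (hf w hw).2
      omega
    rw [show G.dist u w - t = G.dist u v - t + 1 by omega, Function.iterate_succ_apply]
    exact dist_le_one_of_eq_or_adj <| hf.iterate_eq_or_adj_of_dist_eq hconn hftp _ hfd <|
      hf.eq_or_adj_father_of_adj hconn quad noC4 hvw hd
  · rw [show G.dist u v - t = 0 by omega, show G.dist u w - t = 0 by omega]
    exact dist_le_one_of_eq_or_adj (Or.inr hvw)

end SimpleGraph

open SimpleGraph

theorem stmt19_general {V : Type*} (G : SimpleGraph V) (hconn : G.Connected)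
    (quad : ∀ u v w z : V, G.Adj v z → G.Adj w z → G.dist v w = 2 →
      G.dist u v = G.dist u w → G.dist u z = G.dist u v + 1 →
      ∃ x, G.Adj v x ∧ G.Adj w x ∧ G.dist u x + 1 = G.dist u v)
    (noC4 : ¬ ∃ a b c d : V, a ≠ c ∧ b ≠ d ∧ G.Adj a b ∧ G.Adj b c ∧ G.Adj c d ∧
      G.Adj d a ∧ ¬ G.Adj a c ∧ ¬ G.Adj b d)
    (u : V) (f : V → V) (α : V → ℕ)
    (hfu : f u = u)
    (hfather : ∀ v : V, v ≠ u → G.Adj v (f v) ∧ G.dist u (f v) + 1 = G.dist u v)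
    (FTP : ∀ v w : V, v ≠ u → w ≠ u → G.Adj v w →
      (f v = f w ∨ G.Adj (f v) (f w)) ∧
      (G.Adj (f v) (f w) → α w < α v → G.Adj (f w) v)) :
    (∀ (v : V) (t : ℕ), G.dist u (f^[t] v) = G.dist u v - t) ∧
    ∀ v w : V, G.Adj v w → ∀ t : ℕ,
      G.dist (f^[G.dist u v - t] v) (f^[G.dist u w - t] w) ≤ 1 := by
  have hf : IsFatherMap G u f := hfather
  have hftp := fun v w hv hw hvw => (FTP v w hv hw hvw).1
  refine ⟨hf.dist_iterate hfu, fun v w hvw t => ?_⟩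
  obtain hd | hd | hd : G.dist u v = G.dist u w ∨ G.dist u w = G.dist u v + 1 ∨
      G.dist u v = G.dist u w + 1 := by
    have := hvw.diff_dist_adj (u := u)
    have := hvw.symm.diff_dist_adj (u := u)
    omega
  · rw [hd]
    exact dist_le_one_of_eq_or_adj <|
      hf.iterate_eq_or_adj_of_dist_eq hconn hftp _ hd (Or.inr hvw)
  · exact hf.dist_comb_le_one_of_adj_of_dist_succ hconn hftp (quad u) noC4 hvw hd t
  · rw [SimpleGraph.dist_comm]
    exact hf.dist_comb_le_one_of_adj_of_dist_succ hconn hftp (quad u) noC4 hvw.symm hd t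

/-- In a locally finite weakly bridged graph with base point u, the combing
paths obtained by iterating a LexBFS father map f (satisfying the Fellow
Traveler Property) are geodesics that 1-fellow-travel for adjacent vertices. -/
theorem stmt19 {V : Type*} (G : SimpleGraph V) (hconn : G.Connected)
    (hlf : G.LocallyFinite)
    (tri : ∀ u v w : V, G.Adj v w → G.dist u v = G.dist u w →
      ∃ x, G.Adj v x ∧ G.Adj w x ∧ G.dist u x + 1 = G.dist u v)
    (quad : ∀ u v w z : V, G.Adj v z → G.Adj w z → G.dist v w = 2 →
      G.dist u v = G.dist u w → G.dist u z = G.dist u v + 1 →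
      ∃ x, G.Adj v x ∧ G.Adj w x ∧ G.dist u x + 1 = G.dist u v)
    (noC4 : ¬ ∃ a b c d : V, a ≠ c ∧ b ≠ d ∧ G.Adj a b ∧ G.Adj b c ∧ G.Adj c d ∧
      G.Adj d a ∧ ¬ G.Adj a c ∧ ¬ G.Adj b d)
    (u : V) (f : V → V) (α : V → ℕ) (hα : Function.Injective α)
    (hfu : f u = u)
    (hfather : ∀ v : V, v ≠ u → G.Adj v (f v) ∧ G.dist u (f v) + 1 = G.dist u v)
    (FTP : ∀ v w : V, v ≠ u → w ≠ u → G.Adj v w →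
      (f v = f w ∨ G.Adj (f v) (f w)) ∧
      (G.Adj (f v) (f w) → α w < α v → G.Adj (f w) v)) :
    (∀ (v : V) (t : ℕ), G.dist u (f^[t] v) = G.dist u v - t) ∧
    ∀ v w : V, G.Adj v w → ∀ t : ℕ,
      G.dist (f^[G.dist u v - t] v) (f^[G.dist u w - t] w) ≤ 1 :=
  stmt19_general G hconn quad noC4 u f α hfu hfather FTP
end
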